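/- Let R, V : (0, ∞) → ℝ be differentiable functions with V(t) > 0, R(t) ≤ 0 for all t, and suppose R'(t) ≥ (2/3)·R(t)² and V'(t) ≤ -R(t)·V(t) for all t. Then the function t ↦ R(t)·V(t)^{2/3} is non-decreasing. -/

import Mathlib

/-! `(R V^p)' = R' V^p + p R V' V^(p-1)`. Since `R ≤ 0`, the volume bound
`V' ≤ -R V` gives `p R V' V^(p-1) ≥ -p R² V^p`, which the Riccati-type bound `R' ≥ p R²`
exactly compensates. -/

theorem mul_rpow_deriv_nonneg {p r r' v v' : ℝ} (hp : 0 ≤ p) (hv : 0 < v) (hr : r ≤ 0)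
    (hr' : p * r ^ 2 ≤ r') (hv' : v' ≤ -r * v) :
    0 ≤ r' * v ^ p + r * (v' * p * v ^ (p - 1)) := by
  have hrv' : -(r ^ 2 * v) ≤ r * v' := by nlinarith
  calc 0 = p * r ^ 2 * v ^ p + p * v ^ (p - 1) * -(r ^ 2 * v) := by
        rw [Real.rpow_sub_one hv.ne']
        field_simp
        ring
    _ ≤ r' * v ^ p + p * v ^ (p - 1) * (r * v') := by gcongr
    _ = r' * v ^ p + r * (v' * p * v ^ (p - 1)) := by ring

theorem Convex.monotoneOn_of_hasDerivAt_nonneg {D : Set ℝ} (hD : Convex ℝ D) {f f' : ℝ → ℝ}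
    (hf : ∀ x ∈ D, HasDerivAt f (f' x) x)
    (hf'₀ : ∀ x ∈ D, 0 ≤ f' x) : MonotoneOn f D :=
  monotoneOn_of_hasDerivWithinAt_nonneg hD
    (fun x hx => (hf x hx).continuousAt.continuousWithinAt)
    (fun x hx => (hf x (interior_subset hx)).hasDerivWithinAt)
    (fun x hx => hf'₀ x (interior_subset hx))

/-- Monotonicity of the scale-invariant quantity `R(t)·V(t)^{2/3}`. -/
theorem rhat_monotone (R R' V V' : ℝ → ℝ)
    (hV : ∀ t ∈ Set.Ioi (0:ℝ), 0 < V t)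
    (hRle : ∀ t ∈ Set.Ioi (0:ℝ), R t ≤ 0)
    (hRd : ∀ t ∈ Set.Ioi (0:ℝ), HasDerivAt R (R' t) t)
    (hVd : ∀ t ∈ Set.Ioi (0:ℝ), HasDerivAt V (V' t) t)
    (hR' : ∀ t ∈ Set.Ioi (0:ℝ), (2/3) * (R t)^2 ≤ R' t)
    (hV' : ∀ t ∈ Set.Ioi (0:ℝ), V' t ≤ -R t * V t) :
    MonotoneOn (fun t : ℝ => R t * (V t) ^ ((2:ℝ)/3)) (Set.Ioi 0) := by
  exact Convex.monotoneOn_of_hasDerivAt_nonneg (convex_Ioi 0)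
    (fun t ht => (hRd t ht).mul ((hVd t ht).rpow_const (Or.inl (hV t ht).ne')))
    (fun t ht => mul_rpow_deriv_nonneg (by norm_num) (hV t ht) (hRle t ht) (hR' t ht) (hV' t ht))
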